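/- arXiv:1303.0587 — 8 statements merged into one kernel-verified Lean document; each statement's English description precedes it below -/
import Mathlib

section
/- If m and n are positive integers satisfying 3mn − m² − n² = 11 with n ≤ m and 2m ≤ 3n, then (m, n) = (4, 3). -/
/-- If `m` and `n` are positive integers satisfying `3mn − m² − n² = 11` with `n ≤ m` and
`2m ≤ 3n`, then `(m, n) = (4, 3)`. -/
theorem stmt1 (m n : ℤ) (hm : 0 < m) (hn : 0 < n)
    (heq : 3 * m * n - m ^ 2 - n ^ 2 = 11) (h1 : n ≤ m) (h2 : 2 * m ≤ 3 * n) :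
    m = 4 ∧ n = 3 := by
  have hn3 : n ≤ 3 := by nlinarith [sq_nonneg (m - n), sq_nonneg (m - 2*n)]
  have hm4 : m ≤ 4 := by omega
  interval_cases m <;> interval_cases n <;> omega
end

section
/- There are no positive integers r, m, n with r ≥ 2 satisfying 3rmn − m² − n² = 11. -/
lemma stmt2_aux (r : ℤ) (hr2 : 2 ≤ r) :
    ∀ N : ℕ, ∀ m n : ℤ, 0 < m → 0 < n → m + n ≤ N →
      3 * r * m * n - m ^ 2 - n ^ 2 ≠ 11 := by
  intro N
  induction N with
  | zero => intro m n hm hn hs; omega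
  | succ N ih =>
    intro m n hm hn hs heq
    wlog hmn : m ≤ n generalizing m n
    · exact this n m hn hm (by omega) (by linear_combination heq) (by omega)
    have key : n * (3 * r * m - n) = m ^ 2 + 11 := by linear_combination heq
    have hn' : 0 < 3 * r * m - n := by nlinarith [sq_nonneg m]
    rcases lt_or_ge (3 * r * m - n) n with hlt | hge
    · exact ih m (3 * r * m - n) hm hn' (by omega) (by linear_combination heq)
    · have h1 : n ^ 2 ≤ m ^ 2 + 11 := by nlinarith
      have hm2 : m ≤ 2 := by
        nlinarith [mul_nonneg (mul_nonneg (sub_nonneg.2 hr2) hm.le) hn.le,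
          mul_nonneg (sub_nonneg.2 hmn) hm.le]
      have hn3 : n ≤ 3 := by nlinarith
      interval_cases m <;> interval_cases n <;> (revert heq; ring_nf; omega)

/-- There are no positive integers `r, m, n` with `r ≥ 2` satisfying
`3rmn − m² − n² = 11`. -/
theorem stmt2 (r m n : ℤ) (hr : 0 < r) (hm : 0 < m) (hn : 0 < n) (hr2 : 2 ≤ r) :
    3 * r * m * n - m ^ 2 - n ^ 2 ≠ 11 := by
  exact stmt2_aux r hr2 (m + n).toNat m n hm hn (by omega)
end

section
/- If r, m, n are positive integers satisfying 3rmn − m² − n² = 10 with n ≤ m and 2m ≤ 3rn, then (r, m, n) = (4, 1, 1). -/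
/-- If `r, m, n` are positive integers satisfying `3rmn − m² − n² = 10` with `n ≤ m` and
`2m ≤ 3rn`, then `(r, m, n) = (4, 1, 1)`. -/
theorem stmt3 (r m n : ℤ) (hr : 0 < r) (hm : 0 < m) (hn : 0 < n)
    (heq : 3 * r * m * n - m ^ 2 - n ^ 2 = 10) (h1 : n ≤ m) (h2 : 2 * m ≤ 3 * r * n) :
    r = 4 ∧ m = 1 ∧ n = 1 := by
  have hm2 : m ^ 2 ≤ n ^ 2 + 10 := by nlinarith
  have hn4 : n ≤ 4 := by nlinarith
  have hm5 : m ≤ 5 := by nlinarith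
  have hr17 : r ≤ 17 := by nlinarith
  interval_cases n <;> interval_cases m <;> interval_cases r <;> omega
end

section
/- If m = n or 2m = 3rn, then positive integers r, m, n cannot satisfy 3rmn − m² − n² = 11. -/
/-- If `m = n` or `2m = 3rn`, then positive integers `r, m, n` cannot satisfy
`3rmn − m² − n² = 11`. -/
theorem stmt6 (r m n : ℤ) (hr : 0 < r) (hm : 0 < m) (hn : 0 < n)
    (h : m = n ∨ 2 * m = 3 * r * n) :
    3 * r * m * n - m ^ 2 - n ^ 2 ≠ 11 := by
  intro heq
  rcases h with h | h
  · subst h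
    have key : m ^ 2 * (3 * r - 2) = 11 := by ring_nf; ring_nf at heq; linarith
    have hn3 : m ≤ 3 := by nlinarith
    interval_cases m <;> omega
  · have key : m ^ 2 - n ^ 2 = 11 := by nlinarith [h]
    have hdvd : (m + n) ∣ 11 := ⟨m - n, by ring_nf; linarith [key]⟩
    have hle : m + n ≤ 11 := Int.le_of_dvd (by norm_num) hdvd
    have hm10 : m ≤ 10 := by omega
    have hn10 : n ≤ 10 := by omega
    interval_cases m <;> interval_cases n <;> omega
end

section
/- In the polynomial ring ℂ[X, Y, Z], the ideal (Y², Z) ∩ (Z², X) ∩ (X², Y) equals the ideal (XYZ, YZ², X²Z, XY²). -/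
noncomputable def X : MvPolynomial (Fin 3) ℂ := MvPolynomial.X 0
noncomputable def Y : MvPolynomial (Fin 3) ℂ := MvPolynomial.X 1
noncomputable def Z : MvPolynomial (Fin 3) ℂ := MvPolynomial.X 2

noncomputable def vec (a b c : ℕ) : Fin 3 →₀ ℕ :=
  Finsupp.single 0 a + Finsupp.single 1 b + Finsupp.single 2 c

lemma vec_le_iff (a b c : ℕ) (m : Fin 3 →₀ ℕ) :
    vec a b c ≤ m ↔ a ≤ m 0 ∧ b ≤ m 1 ∧ c ≤ m 2 := by
  rw [Finsupp.le_def]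
  constructor
  · intro h
    exact ⟨by simpa [vec] using h 0, by simpa [vec] using h 1, by simpa [vec] using h 2⟩
  · rintro ⟨h0, h1, h2⟩ i
    fin_cases i <;> simpa [vec]

lemma mono (a b c : ℕ) :
    (MvPolynomial.monomial (vec a b c) (1 : ℂ)) = X ^ a * Y ^ b * Z ^ c := by
  simp [X, Y, Z, MvPolynomial.X_pow_eq_monomial, MvPolynomial.monomial_mul, vec]

/-- In `ℂ[X, Y, Z]`, the ideal `(Y², Z) ∩ (Z², X) ∩ (X², Y)` equals the ideal
`(XYZ, YZ², X²Z, XY²)`. -/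
theorem stmt7 :
    Ideal.span {Y ^ 2, Z} ⊓ Ideal.span {Z ^ 2, X} ⊓ Ideal.span {X ^ 2, Y}
      = Ideal.span {X * Y * Z, Y * Z ^ 2, X ^ 2 * Z, X * Y ^ 2} := by
  have e1 : ({Y ^ 2, Z} : Set (MvPolynomial (Fin 3) ℂ)) =
      ((fun s => MvPolynomial.monomial s (1:ℂ)) '' {vec 0 2 0, vec 0 0 1}) := by
    rw [Set.image_insert_eq, Set.image_singleton]
    simp only [mono]; norm_num
  have e2 : ({Z ^ 2, X} : Set (MvPolynomial (Fin 3) ℂ)) =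
      ((fun s => MvPolynomial.monomial s (1:ℂ)) '' {vec 0 0 2, vec 1 0 0}) := by
    rw [Set.image_insert_eq, Set.image_singleton]
    simp only [mono]; norm_num
  have e3 : ({X ^ 2, Y} : Set (MvPolynomial (Fin 3) ℂ)) =
      ((fun s => MvPolynomial.monomial s (1:ℂ)) '' {vec 2 0 0, vec 0 1 0}) := by
    rw [Set.image_insert_eq, Set.image_singleton]
    simp only [mono]; norm_num
  have e4 : ({X * Y * Z, Y * Z ^ 2, X ^ 2 * Z, X * Y ^ 2} : Set (MvPolynomial (Fin 3) ℂ)) =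
      ((fun s => MvPolynomial.monomial s (1:ℂ)) '' {vec 1 1 1, vec 0 1 2, vec 2 0 1, vec 1 2 0}) := by
    rw [Set.image_insert_eq, Set.image_insert_eq, Set.image_insert_eq, Set.image_singleton]
    simp only [mono]; norm_num
  rw [e1, e2, e3, e4]
  ext p
  simp only [Ideal.mem_inf, MvPolynomial.mem_ideal_span_monomial_image]
  constructor
  · rintro ⟨⟨h1, h2⟩, h3⟩ xi hxi
    obtain ⟨s1, hs1, hle1⟩ := h1 xi hxi
    obtain ⟨s2, hs2, hle2⟩ := h2 xi hxi
    obtain ⟨s3, hs3, hle3⟩ := h3 xi hxi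
    simp only [Set.mem_insert_iff, Set.mem_singleton_iff] at hs1 hs2 hs3
    have c1 : 2 ≤ xi 1 ∨ 1 ≤ xi 2 := by
      rcases hs1 with rfl | rfl
      · exact Or.inl ((vec_le_iff _ _ _ _).1 hle1).2.1
      · exact Or.inr ((vec_le_iff _ _ _ _).1 hle1).2.2
    have c2 : 2 ≤ xi 2 ∨ 1 ≤ xi 0 := by
      rcases hs2 with rfl | rfl
      · exact Or.inl ((vec_le_iff _ _ _ _).1 hle2).2.2
      · exact Or.inr ((vec_le_iff _ _ _ _).1 hle2).1
    have c3 : 2 ≤ xi 0 ∨ 1 ≤ xi 1 := by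
      rcases hs3 with rfl | rfl
      · exact Or.inl ((vec_le_iff _ _ _ _).1 hle3).1
      · exact Or.inr ((vec_le_iff _ _ _ _).1 hle3).2.1
    have : (1 ≤ xi 0 ∧ 1 ≤ xi 1 ∧ 1 ≤ xi 2) ∨ (1 ≤ xi 1 ∧ 2 ≤ xi 2) ∨
        (2 ≤ xi 0 ∧ 1 ≤ xi 2) ∨ (1 ≤ xi 0 ∧ 2 ≤ xi 1) := by omega
    rcases this with h | h | h | h
    · exact ⟨vec 1 1 1, by simp, (vec_le_iff _ _ _ _).2 ⟨h.1, h.2.1, h.2.2⟩⟩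
    · exact ⟨vec 0 1 2, by simp, (vec_le_iff _ _ _ _).2 ⟨Nat.zero_le _, h.1, h.2⟩⟩
    · exact ⟨vec 2 0 1, by simp, (vec_le_iff _ _ _ _).2 ⟨h.1, Nat.zero_le _, h.2⟩⟩
    · exact ⟨vec 1 2 0, by simp, (vec_le_iff _ _ _ _).2 ⟨h.1, h.2, Nat.zero_le _⟩⟩
  · intro h
    have key : ∀ xi ∈ p.support, (1 ≤ xi 0 ∧ 1 ≤ xi 1 ∧ 1 ≤ xi 2) ∨ (1 ≤ xi 1 ∧ 2 ≤ xi 2) ∨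
        (2 ≤ xi 0 ∧ 1 ≤ xi 2) ∨ (1 ≤ xi 0 ∧ 2 ≤ xi 1) := by
      intro xi hxi
      obtain ⟨s, hs, hle⟩ := h xi hxi
      simp only [Set.mem_insert_iff, Set.mem_singleton_iff] at hs
      rcases hs with rfl | rfl | rfl | rfl <;> rw [vec_le_iff] at hle <;> omega
    refine ⟨⟨?_, ?_⟩, ?_⟩ <;> intro xi hxi <;>
      have hk := key xi hxi
    · have : 2 ≤ xi 1 ∨ 1 ≤ xi 2 := by omega
      rcases this with hh | hh
      · exact ⟨vec 0 2 0, by simp, (vec_le_iff _ _ _ _).2 ⟨Nat.zero_le _, hh, Nat.zero_le _⟩⟩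
      · exact ⟨vec 0 0 1, by simp, (vec_le_iff _ _ _ _).2 ⟨Nat.zero_le _, Nat.zero_le _, hh⟩⟩
    · have : 2 ≤ xi 2 ∨ 1 ≤ xi 0 := by omega
      rcases this with hh | hh
      · exact ⟨vec 0 0 2, by simp, (vec_le_iff _ _ _ _).2 ⟨Nat.zero_le _, Nat.zero_le _, hh⟩⟩
      · exact ⟨vec 1 0 0, by simp, (vec_le_iff _ _ _ _).2 ⟨hh, Nat.zero_le _, Nat.zero_le _⟩⟩
    · have : 2 ≤ xi 0 ∨ 1 ≤ xi 1 := by omega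
      rcases this with hh | hh
      · exact ⟨vec 2 0 0, by simp, (vec_le_iff _ _ _ _).2 ⟨hh, Nat.zero_le _, Nat.zero_le _⟩⟩
      · exact ⟨vec 0 1 0, by simp, (vec_le_iff _ _ _ _).2 ⟨Nat.zero_le _, hh, Nat.zero_le _⟩⟩
end

section
/- In the polynomial ring ℂ[X, Y, Z], the ideal (X, Z) ∩ (Y, Z) ∩ (X², Y²) equals the ideal (Y²Z, X²Z, XY², X²Y). -/
private lemma monset (s t : Fin 3 →₀ ℕ) :
    ({MvPolynomial.monomial s 1, MvPolynomial.monomial t 1} : Set (MvPolynomial (Fin 3) ℂ))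
      = (fun u => MvPolynomial.monomial u (1 : ℂ)) '' {s, t} := by
  simp [Set.image_insert_eq]

private lemma monset4 (s t u v : Fin 3 →₀ ℕ) :
    ({MvPolynomial.monomial s 1, MvPolynomial.monomial t 1, MvPolynomial.monomial u 1,
      MvPolynomial.monomial v 1} : Set (MvPolynomial (Fin 3) ℂ))
      = (fun w => MvPolynomial.monomial w (1 : ℂ)) '' {s, t, u, v} := by
  simp [Set.image_insert_eq]

private lemma sle (i : Fin 3) (k : ℕ) (m : Fin 3 →₀ ℕ) :
    Finsupp.single i k ≤ m ↔ k ≤ m i :=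
  Finsupp.single_le_iff

private lemma sle2 {i j : Fin 3} (hij : i ≠ j) (k l : ℕ) (m : Fin 3 →₀ ℕ) :
    Finsupp.single i k + Finsupp.single j l ≤ m ↔ k ≤ m i ∧ l ≤ m j := by
  constructor
  · intro h
    constructor
    · have := h i
      simpa [Finsupp.single_apply, hij.symm] using this
    · have := h j
      simpa [Finsupp.single_apply, hij] using this
  · rintro ⟨h1, h2⟩ x
    simp only [Finsupp.add_apply, Finsupp.single_apply]
    split_ifs with e1 e2 e2
    · exact absurd (e1.trans e2.symm) hij
    · subst e1; simpa using h1
    · subst e2; simpa using h2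
    · simp

/-- In `ℂ[X, Y, Z]`, the ideal `(X, Z) ∩ (Y, Z) ∩ (X², Y²)` equals the ideal
`(Y²Z, X²Z, XY², X²Y)`. -/
theorem stmt10 :
    Ideal.span {X, Z} ⊓ Ideal.span {Y, Z} ⊓ Ideal.span {X ^ 2, Y ^ 2}
      = Ideal.span {Y ^ 2 * Z, X ^ 2 * Z, X * Y ^ 2, X ^ 2 * Y} := by
  have hX : X = MvPolynomial.monomial (Finsupp.single 0 1) (1 : ℂ) := by
    simp [X, MvPolynomial.X]
  have hY : Y = MvPolynomial.monomial (Finsupp.single 1 1) (1 : ℂ) := by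
    simp [Y, MvPolynomial.X]
  have hZ : Z = MvPolynomial.monomial (Finsupp.single 2 1) (1 : ℂ) := by
    simp [Z, MvPolynomial.X]
  have hX2 : X ^ 2 = MvPolynomial.monomial (Finsupp.single 0 2) (1 : ℂ) := by
    simp [X, MvPolynomial.X_pow_eq_monomial]
  have hY2 : Y ^ 2 = MvPolynomial.monomial (Finsupp.single 1 2) (1 : ℂ) := by
    simp [Y, MvPolynomial.X_pow_eq_monomial]
  have hY2Z : Y ^ 2 * Z
      = MvPolynomial.monomial (Finsupp.single 1 2 + Finsupp.single 2 1) (1 : ℂ) := by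
    rw [hY2, hZ, MvPolynomial.monomial_mul, one_mul]
  have hX2Z : X ^ 2 * Z
      = MvPolynomial.monomial (Finsupp.single 0 2 + Finsupp.single 2 1) (1 : ℂ) := by
    rw [hX2, hZ, MvPolynomial.monomial_mul, one_mul]
  have hXY2 : X * Y ^ 2
      = MvPolynomial.monomial (Finsupp.single 0 1 + Finsupp.single 1 2) (1 : ℂ) := by
    rw [hX, hY2, MvPolynomial.monomial_mul, one_mul]
  have hX2Y : X ^ 2 * Y
      = MvPolynomial.monomial (Finsupp.single 0 2 + Finsupp.single 1 1) (1 : ℂ) := by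
    rw [hX2, hY, MvPolynomial.monomial_mul, one_mul]
  ext f
  rw [Submodule.mem_inf, Submodule.mem_inf,
    hY2Z, hX2Z, hXY2, hX2Y, hX2, hY2, hX, hY, hZ,
    monset, monset, monset, monset4,
    MvPolynomial.mem_ideal_span_monomial_image,
    MvPolynomial.mem_ideal_span_monomial_image,
    MvPolynomial.mem_ideal_span_monomial_image,
    MvPolynomial.mem_ideal_span_monomial_image]
  have h01 : (0 : Fin 3) ≠ 1 := by decide
  have h02 : (0 : Fin 3) ≠ 2 := by decide
  have h12 : (1 : Fin 3) ≠ 2 := by decide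
  simp only [Set.mem_insert_iff, Set.mem_singleton_iff, exists_eq_or_imp, exists_eq_left,
    sle, sle2 h01, sle2 h02, sle2 h12]
  constructor
  · rintro ⟨⟨h1, h2⟩, h3⟩ m hm
    have a1 := h1 m hm
    have a2 := h2 m hm
    have a3 := h3 m hm
    omega
  · intro h
    refine ⟨⟨fun m hm => ?_, fun m hm => ?_⟩, fun m hm => ?_⟩ <;>
      · have := h m hm
        omega
end

section
/- In the polynomial ring ℂ[X, Y, Z], the ideal (X², Z) ∩ (X³, XY, Y²) equals the ideal (Y²Z, XYZ, X²Y, X³). -/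
noncomputable def e (a b c : ℕ) : Fin 3 →₀ ℕ :=
  Finsupp.single 0 a + Finsupp.single 1 b + Finsupp.single 2 c

lemma e_le_iff (a b c : ℕ) (d : Fin 3 →₀ ℕ) :
    e a b c ≤ d ↔ a ≤ d 0 ∧ b ≤ d 1 ∧ c ≤ d 2 := by
  rw [Finsupp.le_def]
  constructor
  · intro h
    refine ⟨?_, ?_, ?_⟩
    · simpa [e, Finsupp.single_apply] using h 0
    · simpa [e, Finsupp.single_apply] using h 1
    · simpa [e, Finsupp.single_apply] using h 2
  · rintro ⟨h0, h1, h2⟩ i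
    fin_cases i <;> simpa [e, Finsupp.single_apply]

lemma mon_eq (a b c : ℕ) :
    X ^ a * Y ^ b * Z ^ c = MvPolynomial.monomial (e a b c) (1 : ℂ) := by
  simp [X, Y, Z, e, MvPolynomial.X_pow_eq_monomial, MvPolynomial.monomial_mul]

/-- In `ℂ[X, Y, Z]`, the ideal `(X², Z) ∩ (X³, XY, Y²)` equals the ideal
`(Y²Z, XYZ, X²Y, X³)`. -/
theorem stmt11 :
    Ideal.span {X ^ 2, Z} ⊓ Ideal.span {X ^ 3, X * Y, Y ^ 2}
      = Ideal.span {Y ^ 2 * Z, X * Y * Z, X ^ 2 * Y, X ^ 3} := by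
  have g1 : X ^ 2 = MvPolynomial.monomial (e 2 0 0) (1 : ℂ) := by
    simpa using mon_eq 2 0 0
  have g2 : Z = MvPolynomial.monomial (e 0 0 1) (1 : ℂ) := by
    simpa using mon_eq 0 0 1
  have g3 : X ^ 3 = MvPolynomial.monomial (e 3 0 0) (1 : ℂ) := by
    simpa using mon_eq 3 0 0
  have g4 : X * Y = MvPolynomial.monomial (e 1 1 0) (1 : ℂ) := by
    simpa using mon_eq 1 1 0
  have g5 : Y ^ 2 = MvPolynomial.monomial (e 0 2 0) (1 : ℂ) := by
    simpa using mon_eq 0 2 0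
  have g6 : Y ^ 2 * Z = MvPolynomial.monomial (e 0 2 1) (1 : ℂ) := by
    simpa using mon_eq 0 2 1
  have g7 : X * Y * Z = MvPolynomial.monomial (e 1 1 1) (1 : ℂ) := by
    simpa using mon_eq 1 1 1
  have g8 : X ^ 2 * Y = MvPolynomial.monomial (e 2 1 0) (1 : ℂ) := by
    simpa using mon_eq 2 1 0
  have s1 : ({X ^ 2, Z} : Set (MvPolynomial (Fin 3) ℂ))
      = (fun s => MvPolynomial.monomial s (1 : ℂ)) '' {e 2 0 0, e 0 0 1} := by
    rw [Set.image_insert_eq, Set.image_singleton, g1, g2]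
  have s2 : ({X ^ 3, X * Y, Y ^ 2} : Set (MvPolynomial (Fin 3) ℂ))
      = (fun s => MvPolynomial.monomial s (1 : ℂ)) '' {e 3 0 0, e 1 1 0, e 0 2 0} := by
    rw [Set.image_insert_eq, Set.image_insert_eq, Set.image_singleton, g3, g4, g5]
  have s3 : ({Y ^ 2 * Z, X * Y * Z, X ^ 2 * Y, X ^ 3} : Set (MvPolynomial (Fin 3) ℂ))
      = (fun s => MvPolynomial.monomial s (1 : ℂ)) '' {e 0 2 1, e 1 1 1, e 2 1 0, e 3 0 0} := by
    rw [Set.image_insert_eq, Set.image_insert_eq, Set.image_insert_eq, Set.image_singleton,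
      g6, g7, g8, g3]
  ext f
  rw [Ideal.mem_inf, s1, s2, s3, MvPolynomial.mem_ideal_span_monomial_image,
    MvPolynomial.mem_ideal_span_monomial_image, MvPolynomial.mem_ideal_span_monomial_image]
  simp only [Set.mem_insert_iff, Set.mem_singleton_iff, exists_eq_or_imp, exists_eq_left,
    e_le_iff]
  constructor
  · rintro ⟨h1, h2⟩ d hd
    have := h1 d hd
    have := h2 d hd
    omega
  · intro h
    refine ⟨fun d hd => ?_, fun d hd => ?_⟩ <;> · have := h d hd; omega
end

section
/- Let a, b, c, d be complex numbers with ad − bc ≠ 0. In ℂ[X, Y, Z], the ideal (aY + bZ, cY + dZ) ∩ (X, aY + bZ) ∩ (X, cY + dZ) equals the ideal (X(aY + bZ), X(cY + dZ), (aY + bZ)(cY + dZ)). -/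
theorem Ideal.map_inf_of_ringEquiv {R S : Type*} [Semiring R] [Semiring S] (e : R ≃+* S)
    (I J : Ideal R) : (I ⊓ J).map e = I.map e ⊓ J.map e :=
  e.idealComapOrderIso.symm.map_inf I J

theorem Finsupp.single_one_add_single_one_le_iff {σ : Type*} {i j : σ} (hij : i ≠ j)
    {m : σ →₀ ℕ} : single i 1 + single j 1 ≤ m ↔ m i ≠ 0 ∧ m j ≠ 0 := by
  constructor
  · intro h
    have hi := h i
    have hj := h j
    simp [hij, hij.symm] at hi hj
    omega
  · rintro ⟨hi, hj⟩ k
    by_cases hki : k = i <;> by_cases hkj : k = j <;> simp_all <;> omega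

namespace MvPolynomial

section CoordinateAxes

variable {σ R : Type*} [CommSemiring R]

theorem X_mul_X_eq_monomial (i j : σ) :
    (X i * X j : MvPolynomial σ R) = monomial (Finsupp.single i 1 + Finsupp.single j 1) 1 := by
  rw [X, X, monomial_mul, one_mul]

theorem mem_span_X_pair_iff {i j : σ} {f : MvPolynomial σ R} :
    f ∈ Ideal.span {X i, X j} ↔ ∀ m ∈ f.support, m i ≠ 0 ∨ m j ≠ 0 := by
  simp [← Set.image_pair, mem_ideal_span_X_image]

theorem mem_span_X_mul_X_triple_iff {i j k : σ} (hij : i ≠ j) (hik : i ≠ k) (hjk : j ≠ k)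
    {f : MvPolynomial σ R} :
    f ∈ Ideal.span {X i * X j, X i * X k, X j * X k} ↔ ∀ m ∈ f.support,
      m i ≠ 0 ∧ m j ≠ 0 ∨ m i ≠ 0 ∧ m k ≠ 0 ∨ m j ≠ 0 ∧ m k ≠ 0 := by
  rw [show ({X i * X j, X i * X k, X j * X k} : Set (MvPolynomial σ R)) =
      (fun s => monomial s 1) '' {Finsupp.single i 1 + Finsupp.single j 1,
        Finsupp.single i 1 + Finsupp.single k 1, Finsupp.single j 1 + Finsupp.single k 1} by
    simp only [Set.image_insert_eq, Set.image_singleton, X_mul_X_eq_monomial],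
    mem_ideal_span_monomial_image]
  simp only [Set.mem_insert_iff, Set.mem_singleton_iff, exists_eq_or_imp, exists_eq_left,
    Finsupp.single_one_add_single_one_le_iff hij, Finsupp.single_one_add_single_one_le_iff hik,
    Finsupp.single_one_add_single_one_le_iff hjk]

theorem span_X_pair_inf_span_X_pair_inf_span_X_pair {i j k : σ} (hij : i ≠ j) (hik : i ≠ k)
    (hjk : j ≠ k) :
    Ideal.span {X j, X k} ⊓ Ideal.span {X i, X j} ⊓ Ideal.span {X i, X k}
      = (Ideal.span {X i * X j, X i * X k, X j * X k} : Ideal (MvPolynomial σ R)) := by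
  ext f
  simp only [Ideal.mem_inf, mem_span_X_pair_iff, mem_span_X_mul_X_triple_iff hij hik hjk,
    ← forall₂_and]
  refine forall₂_congr fun m _ => ?_
  tauto

end CoordinateAxes

section LinearSubst

variable {σ R : Type*} [Fintype σ]

noncomputable def linearSubst [CommSemiring R] (g : Matrix σ σ R) :
    MvPolynomial σ R →ₐ[R] MvPolynomial σ R :=
  aeval fun i => ∑ j, g i j • X j

theorem linearSubst_X [CommSemiring R] (g : Matrix σ σ R) (i : σ) :
    linearSubst g (X i) = ∑ j, g i j • X j :=
  aeval_X _ _

theorem linearSubst_comp [CommSemiring R] (g h : Matrix σ σ R) :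
    (linearSubst g).comp (linearSubst h) = linearSubst (h * g) := by
  ext i : 1
  simp only [AlgHom.comp_apply, linearSubst_X, map_sum, map_smul, Finset.smul_sum, smul_smul,
    Matrix.mul_apply, Finset.sum_smul]
  exact Finset.sum_comm

theorem linearSubst_one [CommSemiring R] [DecidableEq σ] :
    linearSubst (1 : Matrix σ σ R) = AlgHom.id R _ := by
  ext i : 1
  simp [linearSubst_X, Matrix.one_apply]

noncomputable def linearSubstEquiv [CommRing R] [DecidableEq σ] (g : Matrix σ σ R)
    (hg : IsUnit g.det) : MvPolynomial σ R ≃ₐ[R] MvPolynomial σ R :=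
  AlgEquiv.ofAlgHom (linearSubst g) (linearSubst g⁻¹)
    (by rw [linearSubst_comp, Matrix.nonsing_inv_mul g hg, linearSubst_one])
    (by rw [linearSubst_comp, Matrix.mul_nonsing_inv g hg, linearSubst_one])

theorem linearSubstEquiv_X [CommRing R] [DecidableEq σ] (g : Matrix σ σ R) (hg : IsUnit g.det)
    (i : σ) : linearSubstEquiv g hg (X i) = ∑ j, g i j • X j :=
  linearSubst_X g i

end LinearSubst

end MvPolynomial

/-- For complex numbers `a, b, c, d` with `ad − bc ≠ 0`, in `ℂ[X, Y, Z]` the ideal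
`(aY + bZ, cY + dZ) ∩ (X, aY + bZ) ∩ (X, cY + dZ)` equals
`(X(aY + bZ), X(cY + dZ), (aY + bZ)(cY + dZ))`. -/
theorem stmt13 (a b c d : ℂ) (h : a * d - b * c ≠ 0) :
    Ideal.span {MvPolynomial.C a * Y + MvPolynomial.C b * Z,
        MvPolynomial.C c * Y + MvPolynomial.C d * Z}
      ⊓ Ideal.span {X, MvPolynomial.C a * Y + MvPolynomial.C b * Z}
      ⊓ Ideal.span {X, MvPolynomial.C c * Y + MvPolynomial.C d * Z}
      = Ideal.span {X * (MvPolynomial.C a * Y + MvPolynomial.C b * Z),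
          X * (MvPolynomial.C c * Y + MvPolynomial.C d * Z),
          (MvPolynomial.C a * Y + MvPolynomial.C b * Z) *
            (MvPolynomial.C c * Y + MvPolynomial.C d * Z)} := by
  set e := (MvPolynomial.linearSubstEquiv !![1, 0, 0; 0, a, b; 0, c, d]
    (by simpa [Matrix.det_fin_three] using h)).toRingEquiv
  have hX : e X = X := by simp [e, X, MvPolynomial.linearSubstEquiv_X, Fin.sum_univ_three]
  have hY : e Y = MvPolynomial.C a * Y + MvPolynomial.C b * Z := by
    simp [e, Y, Z, MvPolynomial.linearSubstEquiv_X, Fin.sum_univ_three,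
      MvPolynomial.smul_eq_C_mul]
  have hZ : e Z = MvPolynomial.C c * Y + MvPolynomial.C d * Z := by
    simp [e, Y, Z, MvPolynomial.linearSubstEquiv_X, Fin.sum_univ_three,
      MvPolynomial.smul_eq_C_mul]
  have axes : Ideal.span {Y, Z} ⊓ Ideal.span {X, Y} ⊓ Ideal.span {X, Z}
      = Ideal.span {X * Y, X * Z, Y * Z} :=
    MvPolynomial.span_X_pair_inf_span_X_pair_inf_span_X_pair (by decide) (by decide) (by decide)
  simpa only [Ideal.map_inf_of_ringEquiv, Ideal.map_span, Set.image_insert_eq,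
    Set.image_singleton, map_mul, hX, hY, hZ] using congrArg (Ideal.map e) axes
end
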